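/- Let A, Q be real n×n matrices with Q symmetric, B a real n×m matrix, R a symmetric real m×m matrix with Moore–Penrose inverse R⁺, and let P be a symmetric real n×n matrix satisfying AᵀP + PA + Q − P B R⁺ Bᵀ P = 0 and Bᵀ P = R R⁺ Bᵀ P. Let z : ℝ → ℝᵐ be continuous, let x : ℝ → ℝⁿ be differentiable with x′(t) = A x(t) + B u(t) where u(t) = −R⁺ Bᵀ P x(t) + (I − R⁺ R) z(t), and suppose x(t) → 0 as t → ∞ and the improper integral ∫₀^∞ ( x(t)ᵀ Q x(t) + u(t)ᵀ R u(t) ) dt converges. Then ∫₀^∞ ( x(t)ᵀ Q x(t) + u(t)ᵀ R u(t) ) dt = x(0)ᵀ P x(0). -/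

import Mathlib

/-!
Along a closed-loop trajectory the quadratic form `V(t) = x(t)ᵀ P x(t)` decreases exactly at the
rate of the running cost: expanding `V'` and substituting the Riccati equation gives
`V' = -(xᵀ Q x + uᵀ R u)`. The Moore–Penrose inverse of the symmetric matrix `R` is symmetric and
commutes with `R`, so together with the range condition `Bᵀ P = R R⁺ Bᵀ P` the free component
`(I - R⁺ R) z` is annihilated by `R` and orthogonal to `Bᵀ P x`, and drops out of this identity.
Integrating over `[0, ∞)` and using `x(t) → 0` gives the value `x(0)ᵀ P x(0)`.
-/

open Matrix Filter

namespace Matrix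

variable {K : Type*} [CommRing K] {ι κ : Type*} [Fintype ι] [Fintype κ]

structure IsMoorePenroseInverse (M : Matrix ι κ K) (X : Matrix κ ι K) : Prop where
  self_mul_mul_self : M * X * M = M
  mul_self_mul : X * M * X = X
  transpose_self_mul : (M * X)ᵀ = M * X
  transpose_mul_self : (X * M)ᵀ = X * M

namespace IsMoorePenroseInverse

variable {M : Matrix ι κ K} {X Y : Matrix κ ι K}

theorem transpose (h : M.IsMoorePenroseInverse X) : Mᵀ.IsMoorePenroseInverse Xᵀ where
  self_mul_mul_self := by
    rw [← Matrix.transpose_mul, ← Matrix.transpose_mul, ← Matrix.mul_assoc, h.self_mul_mul_self]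
  mul_self_mul := by
    rw [← Matrix.transpose_mul, ← Matrix.transpose_mul, ← Matrix.mul_assoc, h.mul_self_mul]
  transpose_self_mul := by rw [← Matrix.transpose_mul, transpose_transpose, h.transpose_mul_self]
  transpose_mul_self := by rw [← Matrix.transpose_mul, transpose_transpose, h.transpose_self_mul]

theorem eq_mul_mul (hX : M.IsMoorePenroseInverse X) (hY : M.IsMoorePenroseInverse Y) :
    X = X * M * Y :=
  calc X = X * (M * X)ᵀ := by rw [hX.transpose_self_mul, ← Matrix.mul_assoc, hX.mul_self_mul]
    _ = X * (M * Y * M * X)ᵀ := by rw [hY.self_mul_mul_self]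
    _ = X * (M * X)ᵀ * (M * Y)ᵀ := by simp only [Matrix.transpose_mul, Matrix.mul_assoc]
    _ = X * M * Y := by
      rw [hX.transpose_self_mul, hY.transpose_self_mul, ← Matrix.mul_assoc X M X,
        hX.mul_self_mul, Matrix.mul_assoc]

theorem unique (hX : M.IsMoorePenroseInverse X) (hY : M.IsMoorePenroseInverse Y) : X = Y := by
  have hYX := congrArg Matrix.transpose (hY.transpose.eq_mul_mul hX.transpose)
  simp only [transpose_transpose, Matrix.transpose_mul, ← Matrix.mul_assoc] at hYX
  exact (hX.eq_mul_mul hY).trans hYX.symm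

theorem isSymm {M X : Matrix κ κ K} (hX : M.IsMoorePenroseInverse X) (hM : M.IsSymm) :
    X.IsSymm :=
  (hM.eq ▸ hX.transpose).unique hX

theorem commute {M X : Matrix κ κ K} (hX : M.IsMoorePenroseInverse X) (hM : M.IsSymm) :
    Commute X M := by
  rw [Commute, SemiconjBy, ← hX.transpose_self_mul, Matrix.transpose_mul, hM.eq,
    (hX.isSymm hM).eq]

end IsMoorePenroseInverse

theorem mulVec_dotProduct (M : Matrix ι κ K) (v : κ → K) (w : ι → K) :
    M *ᵥ v ⬝ᵥ w = v ⬝ᵥ Mᵀ *ᵥ w := by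
  rw [dotProduct_comm, dotProduct_mulVec, ← mulVec_transpose, dotProduct_comm]

section Riccati

variable [DecidableEq κ] {A P Q : Matrix ι ι K} {B : Matrix ι κ K} {R Rd : Matrix κ κ K}

def optimalControl (B : Matrix ι κ K) (P : Matrix ι ι K) (R Rd : Matrix κ κ K) (x : ι → K)
    (z : κ → K) : κ → K :=
  -(Rd *ᵥ Bᵀ *ᵥ P *ᵥ x) + (1 - Rd * R) *ᵥ z

theorem mulVec_optimalControl (hR : R.IsMoorePenroseInverse Rd)
    (hReg : Bᵀ * P = R * Rd * Bᵀ * P) (x : ι → K) (z : κ → K) :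
    R *ᵥ optimalControl B P R Rd x z = -(Bᵀ *ᵥ P *ᵥ x) := by
  have hkill : R * (1 - Rd * R) = 0 := by
    rw [Matrix.mul_sub, Matrix.mul_one, ← Matrix.mul_assoc, hR.self_mul_mul_self, sub_self]
  simp only [optimalControl, mulVec_add, mulVec_neg, mulVec_mulVec, hkill, zero_mulVec, add_zero]
  rw [← Matrix.mul_assoc, ← Matrix.mul_assoc, ← hReg]

theorem optimalControl_dotProduct (hR : R.IsMoorePenroseInverse Rd) (hRs : R.IsSymm)
    (hReg : Bᵀ * P = R * Rd * Bᵀ * P) (x : ι → K) (z : κ → K) :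
    optimalControl B P R Rd x z ⬝ᵥ Bᵀ *ᵥ P *ᵥ x = -(Bᵀ *ᵥ P *ᵥ x ⬝ᵥ Rd *ᵥ Bᵀ *ᵥ P *ᵥ x) := by
  have hkill : (1 - Rd * R) * (Bᵀ * P) = 0 := by
    rw [hReg, Matrix.sub_mul, Matrix.one_mul, (hR.commute hRs).eq]
    simp only [← Matrix.mul_assoc]
    rw [hR.self_mul_mul_self, sub_self]
  have hkill' : (1 - Rd * R)ᵀ *ᵥ Bᵀ *ᵥ P *ᵥ x = 0 := by
    rw [transpose_sub, transpose_one, hR.transpose_mul_self, mulVec_mulVec, mulVec_mulVec,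
      Matrix.mul_assoc, hkill, zero_mulVec]
  rw [optimalControl, add_dotProduct, neg_dotProduct, mulVec_dotProduct (1 - Rd * R), hkill',
    dotProduct_zero, add_zero, dotProduct_comm]

theorem riccati_cost_add_deriv_eq_zero (hR : R.IsMoorePenroseInverse Rd) (hRs : R.IsSymm)
    (hP : P.IsSymm) (hRic : Aᵀ * P + P * A + Q - P * B * Rd * Bᵀ * P = 0)
    (hReg : Bᵀ * P = R * Rd * Bᵀ * P) {x : ι → K} {z u : κ → K}
    (hu : u = optimalControl B P R Rd x z) :
    x ⬝ᵥ Q *ᵥ x + u ⬝ᵥ R *ᵥ u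
      + ((A *ᵥ x + B *ᵥ u) ⬝ᵥ P *ᵥ x + x ⬝ᵥ P *ᵥ (A *ᵥ x + B *ᵥ u)) = 0 := by
  set w := Bᵀ *ᵥ P *ᵥ x
  have huw : u ⬝ᵥ w = -(w ⬝ᵥ Rd *ᵥ w) := hu ▸ optimalControl_dotProduct hR hRs hReg x z
  have hRu : u ⬝ᵥ R *ᵥ u = w ⬝ᵥ Rd *ᵥ w := by
    rw [hu, mulVec_optimalControl hR hReg, ← hu, dotProduct_neg, huw, neg_neg]
  have hBu : B *ᵥ u ⬝ᵥ P *ᵥ x = u ⬝ᵥ w := mulVec_dotProduct B u _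
  have hPBu : x ⬝ᵥ P *ᵥ B *ᵥ u = u ⬝ᵥ w := by
    rw [dotProduct_comm, mulVec_dotProduct, hP.eq, hBu]
  have hquad : x ⬝ᵥ Q *ᵥ x + (A *ᵥ x ⬝ᵥ P *ᵥ x + x ⬝ᵥ P *ᵥ A *ᵥ x) = w ⬝ᵥ Rd *ᵥ w := by
    rw [mulVec_dotProduct, mulVec_mulVec, mulVec_mulVec, ← dotProduct_add, ← add_mulVec,
      ← dotProduct_add, ← add_mulVec, add_comm Q, sub_eq_zero.mp hRic]
    simp only [← mulVec_mulVec]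
    rw [dotProduct_comm, mulVec_dotProduct, mulVec_dotProduct, hP.eq, dotProduct_comm]
  rw [mulVec_add, dotProduct_add, add_dotProduct]
  linear_combination hRu + hBu + hPBu + hquad + 2 * huw

end Riccati

end Matrix

section Calculus

variable {𝕜 : Type*} [NontriviallyNormedField 𝕜] {ι κ : Type*} [Fintype ι]
  {f g : 𝕜 → ι → 𝕜} {f' g' : ι → 𝕜} {t : 𝕜}

theorem HasDerivAt.dotProduct (hf : HasDerivAt f f' t) (hg : HasDerivAt g g' t) :
    HasDerivAt (fun s => f s ⬝ᵥ g s) (f' ⬝ᵥ g t + f t ⬝ᵥ g') t :=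
  (HasDerivAt.fun_sum fun i (_ : i ∈ Finset.univ) =>
    (hasDerivAt_pi.1 hf i).mul (hasDerivAt_pi.1 hg i)).congr_deriv Finset.sum_add_distrib

theorem HasDerivAt.matrix_mulVec (M : Matrix κ ι 𝕜) (hf : HasDerivAt f f' t) :
    HasDerivAt (fun s => M *ᵥ f s) (M *ᵥ f') t :=
  hasDerivAt_pi.2 fun i => by
    have := (hasDerivAt_const t (M i)).dotProduct hf
    rwa [zero_dotProduct, zero_add] at this

end Calculus

theorem stmt_6_general {n m : ℕ}
    (A Q : Matrix (Fin n) (Fin n) ℝ)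
    (B : Matrix (Fin n) (Fin m) ℝ)
    (R : Matrix (Fin m) (Fin m) ℝ) (hRsymm : Rᵀ = R)
    (Rd : Matrix (Fin m) (Fin m) ℝ)
    (hR1 : R * Rd * R = R) (hR2 : Rd * R * Rd = Rd)
    (hR3 : (R * Rd)ᵀ = R * Rd) (hR4 : (Rd * R)ᵀ = Rd * R)
    (P : Matrix (Fin n) (Fin n) ℝ) (hPsymm : Pᵀ = P)
    (hRic : Aᵀ * P + P * A + Q - P * B * Rd * Bᵀ * P = 0)
    (hReg : Bᵀ * P = R * Rd * Bᵀ * P)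
    (z : ℝ → Fin m → ℝ)
    (x : ℝ → Fin n → ℝ) (u : ℝ → Fin m → ℝ)
    (hu : ∀ t : ℝ, u t = -(Rd.mulVec (Bᵀ.mulVec (P.mulVec (x t))))
      + ((1 : Matrix (Fin m) (Fin m) ℝ) - Rd * R).mulVec (z t))
    (hx : ∀ t : ℝ, HasDerivAt x (A.mulVec (x t) + B.mulVec (u t)) t)
    (hx0 : Tendsto x atTop (nhds 0))
    (hint : MeasureTheory.IntegrableOn
      (fun t => x t ⬝ᵥ Q.mulVec (x t) + u t ⬝ᵥ R.mulVec (u t)) (Set.Ioi 0)) :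
    ∫ t in Set.Ioi (0:ℝ), (x t ⬝ᵥ Q.mulVec (x t) + u t ⬝ᵥ R.mulVec (u t))
      = x 0 ⬝ᵥ P.mulVec (x 0) := by
  have hRd : R.IsMoorePenroseInverse Rd := ⟨hR1, hR2, hR3, hR4⟩
  have hV (t : ℝ) : HasDerivAt (fun s => x s ⬝ᵥ P *ᵥ x s)
      (-(x t ⬝ᵥ Q *ᵥ x t + u t ⬝ᵥ R *ᵥ u t)) t := by
    rw [← eq_neg_of_add_eq_zero_right
      (riccati_cost_add_deriv_eq_zero hRd hRsymm hPsymm hRic hReg (hu t))]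
    exact (hx t).dotProduct ((hx t).matrix_mulVec P)
  have hVlim : Tendsto (fun s => x s ⬝ᵥ P *ᵥ x s) atTop (nhds 0) := by
    simpa [Function.comp_def] using
      ((continuous_id.dotProduct (continuous_const.matrix_mulVec continuous_id)).tendsto
        (0 : Fin n → ℝ)).comp hx0
  have hFTC :=
    MeasureTheory.integral_Ioi_of_hasDerivAt_of_tendsto' (fun t _ => hV t) hint.neg hVlim
  rwa [MeasureTheory.integral_neg, zero_sub, neg_inj] at hFTC

/-- Under the optimal control `u = −R⁺ Bᵀ P x + (I − R⁺ R) z`, the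
infinite-horizon cost equals `x(0)ᵀ P x(0)` whenever the state tends to zero. -/
theorem stmt_6 {n m : ℕ}
    (A Q : Matrix (Fin n) (Fin n) ℝ) (hQsymm : Qᵀ = Q)
    (B : Matrix (Fin n) (Fin m) ℝ)
    (R : Matrix (Fin m) (Fin m) ℝ) (hRsymm : Rᵀ = R)
    (Rd : Matrix (Fin m) (Fin m) ℝ)
    (hR1 : R * Rd * R = R) (hR2 : Rd * R * Rd = Rd)
    (hR3 : (R * Rd)ᵀ = R * Rd) (hR4 : (Rd * R)ᵀ = Rd * R)
    (P : Matrix (Fin n) (Fin n) ℝ) (hPsymm : Pᵀ = P)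
    (hRic : Aᵀ * P + P * A + Q - P * B * Rd * Bᵀ * P = 0)
    (hReg : Bᵀ * P = R * Rd * Bᵀ * P)
    (z : ℝ → Fin m → ℝ) (hz : Continuous z)
    (x : ℝ → Fin n → ℝ) (u : ℝ → Fin m → ℝ)
    (hu : ∀ t : ℝ, u t = -(Rd.mulVec (Bᵀ.mulVec (P.mulVec (x t))))
      + ((1 : Matrix (Fin m) (Fin m) ℝ) - Rd * R).mulVec (z t))
    (hx : ∀ t : ℝ, HasDerivAt x (A.mulVec (x t) + B.mulVec (u t)) t)
    (hx0 : Tendsto x atTop (nhds 0))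
    (hint : MeasureTheory.IntegrableOn
      (fun t => x t ⬝ᵥ Q.mulVec (x t) + u t ⬝ᵥ R.mulVec (u t)) (Set.Ioi 0)) :
    ∫ t in Set.Ioi (0:ℝ), (x t ⬝ᵥ Q.mulVec (x t) + u t ⬝ᵥ R.mulVec (u t))
      = x 0 ⬝ᵥ P.mulVec (x 0) :=
  stmt_6_general A Q B R hRsymm Rd hR1 hR2 hR3 hR4 P hPsymm hRic hReg z x u hu hx hx0 hint
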